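/- arXiv:hep-th/9811124 — 4 statements merged into one kernel-verified Lean document; each statement's English description precedes it below -/
import Mathlib

section
/- Define coefficients S(σ) for partitions σ by exp(∑_{j≥1} u_j z^j) = ∑_{d≥0} ( ∑_{σ ∈ P_d} S(σ) ∏_{i=1}^{l(σ)} u_{d_i} ) z^d, where the u_j are independent commuting indeterminates. Then for every partition σ_d of d ≥ 1 and every integer m with 0 ≤ m ≤ l(σ_d) - 1, one has ∑_{f=0}^{d} ∑_{σ_f ∪ σ_{d-f} = σ_d} (-1)^{l(σ_f)} f^m S(σ_f) S(σ_{d-f}) = 0, where the inner sum runs over all ways of splitting the multiset of parts of σ_d into two sub-multisets σ_f (parts summing to f) and σ_{d-f} (parts summing to d-f). -/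
set_option linter.unusedSectionVars false
set_option maxHeartbeats 1000000

open PowerSeries Finset

/-- The exponential of a formal power series with zero constant term. -/
noncomputable def expPS {R : Type*} [CommRing R] [Algebra ℚ R]
    (g : PowerSeries R) : PowerSeries R :=
  PowerSeries.mk fun n =>
    ∑ m ∈ Finset.range (n + 1), ((m.factorial : ℚ)⁻¹) • PowerSeries.coeff n (g ^ m)

/-- The series `∑_{j ≥ 1} u_j z^j` in independent indeterminates `u_j`. -/
noncomputable def uSeries : PowerSeries (MvPolynomial ℕ ℚ) :=
  PowerSeries.mk fun j => if j = 0 then 0 else MvPolynomial.X j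

/-- `S(σ)`: the coefficient of the monomial `∏ u_{d_i} z^{|σ|}` in
`exp (∑_{j ≥ 1} u_j z^j)`, for a multiset `σ` of parts. -/
noncomputable def Scoef (s : Multiset ℕ) : ℚ :=
  MvPolynomial.coeff s.toFinsupp
    (PowerSeries.coeff s.sum (expPS uSeries))

section General

variable {A : Type*} [CommRing A] [Algebra ℚ A]

lemma coeff_pow_eq_zero {h : PowerSeries A} (h0 : constantCoeff h = 0) :
    ∀ {k n : ℕ}, n < k → coeff n (h ^ k) = 0 := by
  intro k
  induction k with
  | zero => intro n hn; omega
  | succ k ih =>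
    intro n hn
    rw [pow_succ, mul_comm, coeff_mul]
    apply Finset.sum_eq_zero
    rintro ⟨i, j⟩ hij
    rw [Finset.HasAntidiagonal.mem_antidiagonal] at hij
    rcases Nat.eq_zero_or_pos i with hi | hi
    · subst hi; simp [coeff_zero_eq_constantCoeff, h0]
    · rw [ih (by omega), mul_zero]

lemma coeff_expPS_pad (h : PowerSeries A) (h0 : constantCoeff h = 0) {n N : ℕ}
    (hnN : n ≤ N) :
    coeff n (expPS h) =
      ∑ m ∈ Finset.range (N + 1), ((m.factorial : ℚ)⁻¹) • coeff n (h ^ m) := by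
  rw [expPS, coeff_mk]
  apply Finset.sum_subset
  · intro x hx; rw [Finset.mem_range] at *; omega
  · intro x _ hx
    rw [Finset.mem_range, not_lt] at hx
    rw [coeff_pow_eq_zero h0 (by omega), smul_zero]

noncomputable def theta (P : PowerSeries A) : PowerSeries A :=
  PowerSeries.mk fun n => (n : A) * coeff n P

lemma coeff_theta (n : ℕ) (P : PowerSeries A) :
    coeff n (theta P) = (n : A) * coeff n P := coeff_mk _ _

lemma theta_mul (P Q : PowerSeries A) :
    theta (P * Q) = theta P * Q + P * theta Q := by
  ext n
  rw [map_add, coeff_theta, coeff_mul, coeff_mul, coeff_mul, Finset.mul_sum,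
    ← Finset.sum_add_distrib]
  apply Finset.sum_congr rfl
  rintro ⟨i, j⟩ hij
  rw [Finset.HasAntidiagonal.mem_antidiagonal] at hij
  rw [coeff_theta, coeff_theta]
  subst hij
  push_cast
  ring

lemma theta_pow_succ (h : PowerSeries A) (m : ℕ) :
    theta (h ^ (m + 1)) = (m + 1 : ℕ) • (theta h * h ^ m) := by
  induction m with
  | zero => simp
  | succ m ih =>
    rw [pow_succ (n := m + 1), theta_mul, ih, nsmul_eq_mul, nsmul_eq_mul]
    push_cast
    ring

lemma coeff_theta_iterate (m n : ℕ) (P : PowerSeries A) :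
    coeff n (theta^[m] P) = (n : A) ^ m * coeff n P := by
  induction m with
  | zero => simp
  | succ m ih =>
    rw [Function.iterate_succ_apply', coeff_theta, ih, pow_succ]
    ring

lemma theta_one : theta (1 : PowerSeries A) = 0 := by
  ext n
  rw [coeff_theta, map_zero, PowerSeries.coeff_one]
  rcases n with _ | n <;> simp

lemma coeff_theta_mul_pow_self {h : PowerSeries A} (h0 : constantCoeff h = 0) (n : ℕ) :
    coeff n (theta h * h ^ n) = 0 := by
  rw [coeff_mul]
  apply Finset.sum_eq_zero
  rintro ⟨i, j⟩ hij
  rw [Finset.HasAntidiagonal.mem_antidiagonal] at hij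
  rcases Nat.eq_zero_or_pos i with hi | hi
  · subst hi; simp [coeff_theta]
  · rw [coeff_pow_eq_zero h0 (by omega), mul_zero]

lemma theta_expPS {h : PowerSeries A} (h0 : constantCoeff h = 0) :
    theta (expPS h) = theta h * expPS h := by
  ext n
  have hmid : ∀ m : ℕ, ((m.factorial : ℚ)⁻¹) • coeff n (theta h * h ^ m)
      = ∑ p ∈ Finset.HasAntidiagonal.antidiagonal n,
          coeff p.1 (theta h) * (((m.factorial : ℚ)⁻¹) • coeff p.2 (h ^ m)) := by
    intro m
    rw [coeff_mul, Finset.smul_sum]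
    exact Finset.sum_congr rfl fun p _ => (mul_smul_comm _ _ _).symm
  calc coeff n (theta (expPS h))
      = ∑ m ∈ Finset.range n, ((m.factorial : ℚ)⁻¹) • coeff n (theta h * h ^ m) := by
        rw [coeff_theta, coeff_expPS_pad h h0 (le_refl n), Finset.mul_sum]
        have hc : ∀ m, (n : A) * (((m.factorial : ℚ)⁻¹) • coeff n (h ^ m))
            = ((m.factorial : ℚ)⁻¹) • coeff n (theta (h ^ m)) := by
          intro m; rw [coeff_theta, mul_smul_comm]
        simp only [hc]
        rw [Finset.sum_range_succ']
        rw [show ((Nat.factorial 0 : ℚ))⁻¹ • coeff n (theta (h ^ 0)) = 0 by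
          simp [theta_one]]
        rw [add_zero]
        apply Finset.sum_congr rfl
        intro m _
        rw [theta_pow_succ, map_nsmul, ← Nat.cast_smul_eq_nsmul ℚ, smul_smul]
        congr 1
        rw [Nat.factorial_succ]
        have hne : (m.factorial : ℚ) ≠ 0 := Nat.cast_ne_zero.mpr m.factorial_ne_zero
        push_cast
        field_simp
    _ = ∑ m ∈ Finset.range (n + 1), ((m.factorial : ℚ)⁻¹) • coeff n (theta h * h ^ m) := by
        rw [Finset.sum_range_succ, coeff_theta_mul_pow_self h0, smul_zero, add_zero]
    _ = coeff n (theta h * expPS h) := by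
        simp only [hmid]
        rw [Finset.sum_comm, coeff_mul]
        apply Finset.sum_congr rfl
        rintro ⟨i, j⟩ hij
        rw [← Finset.mul_sum]
        congr 1
        rw [Finset.HasAntidiagonal.mem_antidiagonal] at hij
        rw [coeff_expPS_pad h h0 (N := n) (by omega)]

lemma choose_inv_sum (k : ℕ) :
    ∑ a ∈ Finset.range (k + 1), (-1 : ℚ) ^ a * ((a.factorial : ℚ) * ((k - a).factorial : ℚ))⁻¹
      = if k = 0 then 1 else 0 := by
  have h1 : ∀ a ∈ Finset.range (k + 1),
      (-1 : ℚ) ^ a * ((a.factorial : ℚ) * ((k - a).factorial : ℚ))⁻¹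
        = (k.factorial : ℚ)⁻¹ * ((-1 : ℚ) ^ a * (k.choose a : ℚ)) := by
    intro a ha
    rw [Finset.mem_range] at ha
    have h3 : (k.choose a : ℚ) * ((a.factorial : ℚ) * ((k - a).factorial : ℚ))
        = (k.factorial : ℚ) := by
      push_cast [← Nat.choose_mul_factorial_mul_factorial (show a ≤ k by omega)]
      ring
    have ha2 : ((a.factorial : ℚ) * ((k - a).factorial : ℚ)) ≠ 0 := by positivity
    have hk : (k.factorial : ℚ) ≠ 0 := Nat.cast_ne_zero.mpr k.factorial_ne_zero
    have h2 : ((a.factorial : ℚ) * ((k - a).factorial : ℚ))⁻¹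
        = (k.factorial : ℚ)⁻¹ * (k.choose a : ℚ) := by
      field_simp
      linear_combination -h3
    rw [h2]; ring
  rw [Finset.sum_congr rfl h1, ← Finset.mul_sum]
  have h3 : ∑ a ∈ Finset.range (k + 1), ((-1 : ℚ) ^ a * (k.choose a : ℚ))
      = ((∑ a ∈ Finset.range (k + 1), ((-1 : ℤ) ^ a * (k.choose a : ℤ)) : ℤ) : ℚ) := by
    push_cast
    rfl
  rw [h3, Int.alternating_sum_range_choose]
  rcases eq_or_ne k 0 with rfl | hk
  · simp
  · simp [hk]

lemma key_group {M : Type*} [AddCommMonoid M] [Module ℚ M] (n : ℕ) (F : ℕ → M)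
    (hF : ∀ k, n < k → F k = 0) :
    ∑ a ∈ Finset.range (n + 1), ∑ b ∈ Finset.range (n + 1),
      ((-1 : ℚ) ^ a * ((a.factorial : ℚ) * (b.factorial : ℚ))⁻¹) • F (a + b) = F 0 := by
  have step1 : ∀ a ∈ Finset.range (n + 1), ∀ b ∈ Finset.range (n + 1),
      ((-1 : ℚ) ^ a * ((a.factorial : ℚ) * (b.factorial : ℚ))⁻¹) • F (a + b)
      = ∑ k ∈ Finset.range (n + 1), if a + b = k then
          ((-1 : ℚ) ^ a * ((a.factorial : ℚ) * (b.factorial : ℚ))⁻¹) • F k else 0 := by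
    intro a _ b _
    rcases le_or_gt (a + b) n with hab | hab
    · rw [Finset.sum_eq_single (a + b)]
      · simp
      · intro k _ hk; rw [if_neg (fun h => hk h.symm)]
      · intro h; exact absurd (Finset.mem_range.mpr (by omega)) h
    · rw [hF _ hab, smul_zero]
      symm; apply Finset.sum_eq_zero
      intro k hk
      rw [Finset.mem_range] at hk
      rw [if_neg (by omega)]
  calc ∑ a ∈ Finset.range (n + 1), ∑ b ∈ Finset.range (n + 1),
        ((-1 : ℚ) ^ a * ((a.factorial : ℚ) * (b.factorial : ℚ))⁻¹) • F (a + b)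
      = ∑ a ∈ Finset.range (n + 1), ∑ b ∈ Finset.range (n + 1), ∑ k ∈ Finset.range (n + 1),
          (if a + b = k then
            ((-1 : ℚ) ^ a * ((a.factorial : ℚ) * (b.factorial : ℚ))⁻¹) • F k else 0) := by
        apply Finset.sum_congr rfl; intro a ha
        exact Finset.sum_congr rfl fun b hb => step1 a ha b hb
    _ = ∑ a ∈ Finset.range (n + 1), ∑ k ∈ Finset.range (n + 1), ∑ b ∈ Finset.range (n + 1),
          (if a + b = k then
            ((-1 : ℚ) ^ a * ((a.factorial : ℚ) * (b.factorial : ℚ))⁻¹) • F k else 0) :=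
        Finset.sum_congr rfl fun a _ => Finset.sum_comm
    _ = ∑ k ∈ Finset.range (n + 1), ∑ a ∈ Finset.range (n + 1), ∑ b ∈ Finset.range (n + 1),
          (if a + b = k then
            ((-1 : ℚ) ^ a * ((a.factorial : ℚ) * (b.factorial : ℚ))⁻¹) • F k else 0) :=
        Finset.sum_comm
    _ = ∑ k ∈ Finset.range (n + 1),
          (∑ a ∈ Finset.range (k + 1),
            (-1 : ℚ) ^ a * ((a.factorial : ℚ) * ((k - a).factorial : ℚ))⁻¹) • F k := by
        apply Finset.sum_congr rfl
        intro k hk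
        rw [Finset.mem_range] at hk
        have hinner : ∀ a ∈ Finset.range (n + 1),
            (∑ b ∈ Finset.range (n + 1), if a + b = k then
              ((-1 : ℚ) ^ a * ((a.factorial : ℚ) * (b.factorial : ℚ))⁻¹) • F k else 0)
            = if a ≤ k then
                ((-1 : ℚ) ^ a * ((a.factorial : ℚ) * ((k - a).factorial : ℚ))⁻¹) • F k
              else 0 := by
          intro a ha
          rw [Finset.mem_range] at ha
          rcases le_or_gt a k with hak | hak
          · rw [Finset.sum_eq_single (k - a)]
            · rw [if_pos (by omega), if_pos hak]
            · intro b _ hb; rw [if_neg (by omega)]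
            · intro hmem; exact absurd (Finset.mem_range.mpr (by omega)) hmem
          · rw [if_neg (by omega)]
            exact Finset.sum_eq_zero fun b _ => if_neg (by omega)
        rw [Finset.sum_congr rfl hinner, ← Finset.sum_filter]
        have hfil : (Finset.range (n + 1)).filter (fun a => a ≤ k) = Finset.range (k + 1) := by
          ext a
          simp only [Finset.mem_filter, Finset.mem_range]
          omega
        rw [hfil, Finset.sum_smul]
    _ = F 0 := by
        rw [Finset.sum_congr rfl (fun k _ => by rw [choose_inv_sum k])]
        rw [Finset.sum_congr rfl (g := fun k => if k = 0 then F 0 else 0) (fun k _ => by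
          rcases eq_or_ne k 0 with rfl | hk
          · simp
          · simp [hk])]
        simp

lemma coeff_neg_pow (h : PowerSeries A) (a i : ℕ) :
    coeff i ((-h) ^ a) = (-1 : ℚ) ^ a • coeff i (h ^ a) := by
  rcases Nat.even_or_odd a with he | ho
  · rw [he.neg_pow, he.neg_one_pow, one_smul]
  · rw [ho.neg_pow, map_neg, ho.neg_one_pow, neg_one_smul]

lemma expPS_neg_mul {h : PowerSeries A} (h0 : constantCoeff h = 0) :
    expPS (-h) * expPS h = 1 := by
  have hneg0 : constantCoeff (-h) = 0 := by rw [map_neg, h0, neg_zero]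
  ext n
  rw [coeff_mul]
  have tm : ∀ (x y : A) (a b : ℕ),
      (((a.factorial : ℚ)⁻¹) • ((-1 : ℚ) ^ a • x)) * (((b.factorial : ℚ)⁻¹) • y)
      = ((-1 : ℚ) ^ a * ((a.factorial : ℚ) * (b.factorial : ℚ))⁻¹) • (x * y) := by
    intros x y a b
    rw [smul_smul, smul_mul_smul_comm]
    congr 1
    rw [mul_inv]
    ring
  calc ∑ p ∈ Finset.HasAntidiagonal.antidiagonal n, coeff p.1 (expPS (-h)) * coeff p.2 (expPS h)
      = ∑ p ∈ Finset.HasAntidiagonal.antidiagonal n, ∑ a ∈ Finset.range (n + 1), ∑ b ∈ Finset.range (n + 1),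
          ((-1 : ℚ) ^ a * ((a.factorial : ℚ) * (b.factorial : ℚ))⁻¹) •
            (coeff p.1 (h ^ a) * coeff p.2 (h ^ b)) := by
        apply Finset.sum_congr rfl
        rintro ⟨i, j⟩ hij
        rw [Finset.HasAntidiagonal.mem_antidiagonal] at hij
        rw [coeff_expPS_pad (-h) hneg0 (show i ≤ n by omega),
          coeff_expPS_pad h h0 (show j ≤ n by omega), Finset.sum_mul_sum]
        apply Finset.sum_congr rfl; intro a _
        apply Finset.sum_congr rfl; intro b _
        rw [coeff_neg_pow, tm]
    _ = ∑ a ∈ Finset.range (n + 1), ∑ b ∈ Finset.range (n + 1),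
          ((-1 : ℚ) ^ a * ((a.factorial : ℚ) * (b.factorial : ℚ))⁻¹) • coeff n (h ^ (a + b)) := by
        rw [Finset.sum_comm]
        apply Finset.sum_congr rfl; intro a _
        rw [Finset.sum_comm]
        apply Finset.sum_congr rfl; intro b _
        rw [← Finset.smul_sum, ← coeff_mul, ← pow_add]
    _ = coeff n (h ^ (0 : ℕ)) :=
        key_group n _ (fun k hk => coeff_pow_eq_zero h0 hk)
    _ = coeff n 1 := by rw [pow_zero]

end General

section USeries

def wtF (a : ℕ →₀ ℕ) : ℕ := a.sum fun j v => j * v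
def degF (a : ℕ →₀ ℕ) : ℕ := a.sum fun _ v => v

lemma wtF_add (a b : ℕ →₀ ℕ) : wtF (a + b) = wtF a + wtF b :=
  Finsupp.sum_add_index' (fun _ => by simp) (fun _ _ _ => by ring)

lemma degF_add (a b : ℕ →₀ ℕ) : degF (a + b) = degF a + degF b :=
  Finsupp.sum_add_index' (fun _ => by simp) (fun _ _ _ => rfl)

lemma wtF_single (j : ℕ) : wtF (Finsupp.single j 1) = j := by
  rw [wtF, Finsupp.sum_single_index] <;> simp

lemma degF_single (j : ℕ) : degF (Finsupp.single j 1) = 1 := by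
  rw [degF, Finsupp.sum_single_index] <;> simp

lemma wtF_toFinsupp (s : Multiset ℕ) : wtF s.toFinsupp = s.sum := by
  induction s using Multiset.induction_on with
  | empty => simp [wtF]
  | cons a s ih =>
    rw [← Multiset.singleton_add, Multiset.toFinsupp_add, wtF_add,
      Multiset.toFinsupp_singleton, wtF_single, Multiset.sum_add, ih, Multiset.sum_singleton]

lemma degF_toFinsupp (s : Multiset ℕ) : degF s.toFinsupp = Multiset.card s := by
  induction s using Multiset.induction_on with
  | empty => simp [degF]
  | cons a s ih =>
    rw [← Multiset.singleton_add, Multiset.toFinsupp_add, degF_add,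
      Multiset.toFinsupp_singleton, degF_single, Multiset.card_add, ih,
      Multiset.card_singleton]

lemma coeff_uSeries (j : ℕ) :
    coeff j uSeries = if j = 0 then 0 else MvPolynomial.X j :=
  coeff_mk _ _

lemma constantCoeff_uSeries : constantCoeff uSeries = 0 := by
  rw [← coeff_zero_eq_constantCoeff, coeff_uSeries]
  simp

lemma hom_pow : ∀ (k n : ℕ) (a : ℕ →₀ ℕ),
    MvPolynomial.coeff a (coeff n (uSeries ^ k)) ≠ 0 →
      degF a = k ∧ wtF a = n := by
  intro k
  induction k with
  | zero =>
    intro n a h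
    rw [pow_zero] at h
    rcases eq_or_ne n 0 with rfl | hn
    · rw [coeff_zero_eq_constantCoeff, map_one, MvPolynomial.coeff_one] at h
      rcases eq_or_ne a 0 with rfl | ha
      · constructor <;> simp [degF, wtF]
      · exact absurd (by simp [Ne.symm ha]) h
    · rw [PowerSeries.coeff_one, if_neg hn] at h
      simp at h
  | succ k ih =>
    intro n a h
    rw [pow_succ', coeff_mul, MvPolynomial.coeff_sum] at h
    obtain ⟨p, hp, hp0⟩ := Finset.exists_ne_zero_of_sum_ne_zero h
    rw [MvPolynomial.coeff_mul] at hp0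
    obtain ⟨q, hq, hq0⟩ := Finset.exists_ne_zero_of_sum_ne_zero hp0
    have h1 := left_ne_zero_of_mul hq0
    have h2 := right_ne_zero_of_mul hq0
    rw [coeff_uSeries] at h1
    rcases eq_or_ne p.1 0 with e | e
    · rw [if_pos e] at h1; simp at h1
    · rw [if_neg e, MvPolynomial.coeff_X'] at h1
      have hq1 : Finsupp.single p.1 1 = q.1 := by
        by_contra hc
        rw [if_neg hc] at h1
        exact h1 rfl
      obtain ⟨hd, hw⟩ := ih p.2 q.2 h2
      rw [Finset.HasAntidiagonal.mem_antidiagonal] at hp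
      rw [Finset.HasAntidiagonal.mem_antidiagonal] at hq
      constructor
      · rw [← hq, degF_add, ← hq1, degF_single, hd]; ring
      · rw [← hq, wtF_add, ← hq1, wtF_single, hw, hp]

lemma hom_exp {n : ℕ} {a : ℕ →₀ ℕ} (hw : wtF a ≠ n) :
    MvPolynomial.coeff a (coeff n (expPS uSeries)) = 0 := by
  rw [expPS, coeff_mk, MvPolynomial.coeff_sum]
  apply Finset.sum_eq_zero
  intro k _
  rw [MvPolynomial.coeff_smul]
  rw [show MvPolynomial.coeff a (coeff n (uSeries ^ k)) = 0 from
    by_contra fun hc => hw (hom_pow k n a hc).2]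
  simp

lemma hom_exp_neg {n : ℕ} {a : ℕ →₀ ℕ} (hw : wtF a ≠ n) :
    MvPolynomial.coeff a (coeff n (expPS (-uSeries))) = 0 := by
  rw [expPS, coeff_mk, MvPolynomial.coeff_sum]
  apply Finset.sum_eq_zero
  intro k _
  rw [MvPolynomial.coeff_smul, coeff_neg_pow, MvPolynomial.coeff_smul]
  rw [show MvPolynomial.coeff a (coeff n (uSeries ^ k)) = 0 from
    by_contra fun hc => hw (hom_pow k n a hc).2]
  simp

lemma sign_exp_neg (n : ℕ) (a : ℕ →₀ ℕ) :
    MvPolynomial.coeff a (coeff n (expPS (-uSeries)))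
      = (-1 : ℚ) ^ (degF a) * MvPolynomial.coeff a (coeff n (expPS uSeries)) := by
  rw [expPS, expPS, coeff_mk, coeff_mk, MvPolynomial.coeff_sum, MvPolynomial.coeff_sum,
    Finset.mul_sum]
  apply Finset.sum_congr rfl
  intro k _
  rw [MvPolynomial.coeff_smul, MvPolynomial.coeff_smul, coeff_neg_pow,
    MvPolynomial.coeff_smul]
  rcases eq_or_ne (degF a) k with rfl | hk
  · rw [smul_eq_mul, smul_eq_mul, smul_eq_mul]
    ring
  · rw [show MvPolynomial.coeff a (coeff n (uSeries ^ k)) = 0 from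
      by_contra fun hc => hk (hom_pow k n a hc).1]
    simp

noncomputable def Bser : ℕ → PowerSeries (MvPolynomial ℕ ℚ)
  | 0 => 1
  | m + 1 => theta (Bser m) - theta uSeries * Bser m

lemma DmE (m : ℕ) :
    theta^[m] (expPS (-uSeries)) * expPS uSeries = Bser m := by
  induction m with
  | zero => simpa [Bser] using expPS_neg_mul constantCoeff_uSeries
  | succ m ih =>
    rw [Function.iterate_succ_apply', Bser, ← ih]
    have h1 := theta_mul (theta^[m] (expPS (-uSeries))) (expPS uSeries)
    rw [theta_expPS constantCoeff_uSeries] at h1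
    linear_combination -h1

lemma Bdeg (m : ℕ) : ∀ n, (coeff n (Bser m)).totalDegree ≤ m := by
  induction m with
  | zero =>
    intro n
    rw [Bser, PowerSeries.coeff_one]
    rcases eq_or_ne n 0 with rfl | hn
    · simp
    · simp [hn]
  | succ m ih =>
    intro n
    rw [Bser, map_sub]
    apply le_trans (MvPolynomial.totalDegree_sub _ _)
    rw [max_le_iff]
    constructor
    · rw [coeff_theta]
      rw [show ((n : MvPolynomial ℕ ℚ)) = MvPolynomial.C ((n : ℚ)) from (map_natCast _ n).symm]
      apply le_trans (MvPolynomial.totalDegree_mul _ _)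
      rw [MvPolynomial.totalDegree_C]
      have := ih n
      omega
    · rw [coeff_mul]
      apply le_trans (MvPolynomial.totalDegree_finset_sum _ _)
      apply Finset.sup_le
      intro p _
      apply le_trans (MvPolynomial.totalDegree_mul _ _)
      have hθ : (coeff p.1 (theta uSeries)).totalDegree ≤ 1 := by
        rw [coeff_theta, coeff_uSeries]
        rcases eq_or_ne p.1 0 with hi | hi
        · rw [if_pos hi]; simp
        · rw [if_neg hi,
            show ((p.1 : MvPolynomial ℕ ℚ)) = MvPolynomial.C ((p.1 : ℚ)) from
              (map_natCast _ _).symm]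
          apply le_trans (MvPolynomial.totalDegree_mul _ _)
          rw [MvPolynomial.totalDegree_C, MvPolynomial.totalDegree_X]
      have h2 := ih p.2
      omega

end USeries

/-- For every partition `σ_d` of `d ≥ 1` and `0 ≤ m ≤ l(σ_d) - 1`,
`∑_{σ_f ∪ σ_{d-f} = σ_d} (-1)^{l(σ_f)} f^m S(σ_f) S(σ_{d-f}) = 0`, the sum
running over all splittings of the multiset of parts into two sub-multisets. -/
theorem schur_splitting_sum_eq_zero (d : ℕ) (hd : 1 ≤ d) (σ : Nat.Partition d)
    (m : ℕ) (hm : m + 1 ≤ Multiset.card σ.parts) :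
    ∑ t ∈ σ.parts.powerset.toFinset,
      (-1 : ℚ) ^ Multiset.card t * (t.sum : ℚ) ^ m * Scoef t * Scoef (σ.parts - t)
      = 0 := by
  classical
  have hiter : ∀ (a : ℕ →₀ ℕ) (i : ℕ),
      MvPolynomial.coeff a
          (coeff i (theta^[m] (expPS (-uSeries))))
        = (i : ℚ) ^ m *
          MvPolynomial.coeff a (coeff i (expPS (-uSeries))) := by
    intro a i
    rw [coeff_theta_iterate,
      show ((i : MvPolynomial ℕ ℚ)) ^ m = MvPolynomial.C ((i : ℚ) ^ m) by
        rw [map_pow, map_natCast],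
      MvPolynomial.coeff_C_mul]
  have hd2 : σ.parts.sum = d := σ.parts_sum
  calc ∑ t ∈ σ.parts.powerset.toFinset,
        (-1 : ℚ) ^ Multiset.card t * (t.sum : ℚ) ^ m * Scoef t * Scoef (σ.parts - t)
      = ∑ p ∈ Finset.HasAntidiagonal.antidiagonal σ.parts.toFinsupp,
          MvPolynomial.coeff p.1
            (coeff (wtF p.1) (theta^[m] (expPS (-uSeries)))) *
          MvPolynomial.coeff p.2
            (coeff (wtF p.2) (expPS uSeries)) := by
        apply Finset.sum_nbij'
          (i := fun t => (t.toFinsupp, (σ.parts - t).toFinsupp))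
          (j := fun p => p.1.toMultiset)
        · intro t ht
          rw [Multiset.mem_toFinset, Multiset.mem_powerset] at ht
          rw [Finset.HasAntidiagonal.mem_antidiagonal, ← Multiset.toFinsupp_add,
            add_tsub_cancel_of_le ht]
        · intro p hp
          rw [Finset.HasAntidiagonal.mem_antidiagonal] at hp
          rw [Multiset.mem_toFinset, Multiset.mem_powerset]
          have h2 := congrArg Finsupp.toMultiset hp
          rw [map_add, Multiset.toFinsupp_toMultiset] at h2
          rw [← h2]
          exact Multiset.le_add_right _ _
        · intro t ht
          simp
        · intro p hp
          rw [Finset.HasAntidiagonal.mem_antidiagonal] at hp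
          have h2 := congrArg Finsupp.toMultiset hp
          rw [map_add, Multiset.toFinsupp_toMultiset] at h2
          have h3 : σ.parts - p.1.toMultiset = p.2.toMultiset := by
            rw [← h2, add_tsub_cancel_left]
          rw [h3]
          ext <;> simp
        · intro t ht
          rw [Multiset.mem_toFinset, Multiset.mem_powerset] at ht
          rw [hiter, wtF_toFinsupp, wtF_toFinsupp, sign_exp_neg, degF_toFinsupp]
          simp only [Scoef]
          ring
    _ = MvPolynomial.coeff σ.parts.toFinsupp
          (coeff d (theta^[m] (expPS (-uSeries)) * expPS uSeries)) := by
        rw [coeff_mul, MvPolynomial.coeff_sum]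
        simp only [MvPolynomial.coeff_mul]
        rw [Finset.sum_comm]
        apply Finset.sum_congr rfl
        intro p hp
        rw [Finset.HasAntidiagonal.mem_antidiagonal] at hp
        have hw : wtF p.1 + wtF p.2 = d := by
          have := congrArg wtF hp
          rw [wtF_add, wtF_toFinsupp, hd2] at this
          exact this
        rw [Finset.sum_eq_single ((wtF p.1, wtF p.2) : ℕ × ℕ)]
        · intro q hq hne
          rw [Finset.HasAntidiagonal.mem_antidiagonal] at hq
          rcases eq_or_ne q.1 (wtF p.1) with h1 | h1
          · exfalso
            exact hne (Prod.ext h1 (by omega))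
          · rw [hiter, hom_exp_neg (fun hc => h1 hc.symm)]
            simp
        · intro hnot
          exact absurd (Finset.HasAntidiagonal.mem_antidiagonal.mpr hw) hnot
    _ = MvPolynomial.coeff σ.parts.toFinsupp (coeff d (Bser m)) := by
        rw [DmE]
    _ = 0 := by
        apply MvPolynomial.coeff_eq_zero_of_totalDegree_lt
        have h1 := Bdeg m d
        have h2 : ∑ i ∈ σ.parts.toFinsupp.support, σ.parts.toFinsupp i
            = Multiset.card σ.parts := by
          rw [← degF_toFinsupp σ.parts]
          rfl
        omega
end

section
/- With S(σ) defined by exp(∑_{j≥1} u_j z^j) = ∑_{d≥0} (∑_{σ ∈ P_d} S(σ) ∏ u_{d_i}) z^d, for every partition σ_d of d ≥ 1 and all nonnegative integers m, j with m + j ≤ l(σ_d) - 1, one has ∑_{f=0}^{d} ∑_{σ_f ∪ σ_{d-f} = σ_d} (-1)^{l(σ_f)} f^m ( ∏_{k=1}^{j} (l(σ_f) - k) ) S(σ_f) S(σ_{d-f}) = 0. -/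
/-! ### auxiliary -/

/-- product of factorials of multiplicities -/
def Pfac (s : Multiset ℕ) : ℕ := ∏ a ∈ s.toFinset, (s.count a).factorial

lemma Pfac_pos (s : Multiset ℕ) : 0 < Pfac s :=
  Finset.prod_pos fun _ _ => Nat.factorial_pos _

@[simp] lemma Pfac_zero : Pfac 0 = 1 := by simp [Pfac]

lemma Pfac_cons (a : ℕ) (s : Multiset ℕ) :
    Pfac (a ::ₘ s) = (s.count a + 1) * Pfac s := by
  unfold Pfac
  by_cases h : a ∈ s
  · have ha : a ∈ s.toFinset := Multiset.mem_toFinset.2 h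
    rw [Multiset.toFinset_cons, Finset.insert_eq_self.2 ha]
    rw [← Finset.mul_prod_erase _ _ ha, ← Finset.mul_prod_erase _ (fun b => (s.count b).factorial) ha]
    rw [Multiset.count_cons_self, Nat.factorial_succ, mul_assoc]
    congr 1
    congr 1
    refine Finset.prod_congr rfl fun b hb => ?_
    rw [Multiset.count_cons_of_ne (Finset.ne_of_mem_erase hb)]
  · have ha : a ∉ s.toFinset := fun hc => h (Multiset.mem_toFinset.1 hc)
    rw [Multiset.toFinset_cons, Finset.prod_insert ha, Multiset.count_cons_self,
      Multiset.count_eq_zero.2 h]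
    simp only [Nat.zero_add, Nat.factorial_one, one_mul]
    refine Finset.prod_congr rfl fun b hb => ?_
    rw [Multiset.count_cons_of_ne]
    rintro rfl; exact ha hb

lemma Pfac_erase {a : ℕ} {s : Multiset ℕ} (h : a ∈ s) :
    Pfac s = s.count a * Pfac (s.erase a) := by
  have h1 := Pfac_cons a (s.erase a)
  rw [Multiset.cons_erase h] at h1
  rw [h1, Multiset.count_erase_self]
  have : 1 ≤ s.count a := Multiset.one_le_count_iff_mem.2 h
  congr 1
  omega

lemma mem_le_sum {p : ℕ} {s : Multiset ℕ} (h : p ∈ s) : p ≤ s.sum := by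
  calc p ≤ p + (s.erase p).sum := Nat.le_add_right _ _
    _ = s.sum := by rw [← Multiset.sum_cons, Multiset.cons_erase h]

lemma card_le_sum {s : Multiset ℕ} (hs : 0 ∉ s) : Multiset.card s ≤ s.sum := by
  induction s using Multiset.induction_on with
  | empty => simp
  | cons a s ih =>
    simp only [Multiset.card_cons, Multiset.sum_cons]
    have ha : a ≠ 0 := fun h => hs (h ▸ Multiset.mem_cons_self a s)
    have := ih (fun h => hs (Multiset.mem_cons_of_mem h))
    omega

/-- the inner coefficient -/
noncomputable def cf (m : ℕ) (s : Multiset ℕ) : ℚ :=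
  MvPolynomial.coeff s.toFinsupp
    (PowerSeries.coeff s.sum (uSeries ^ m))

lemma cf_zero {s : Multiset ℕ} (hs : 0 ∉ s) :
    cf 0 s = if s = 0 then 1 else 0 := by
  unfold cf
  rw [pow_zero, PowerSeries.coeff_one]
  split_ifs with h1 h2 h2
  · subst h2; simp
  · exfalso
    obtain ⟨a, ha⟩ := Multiset.exists_mem_of_ne_zero h2
    have := mem_le_sum ha
    have : a ≠ 0 := fun h => hs (h ▸ ha)
    omega
  · exfalso; subst h2; simp at h1
  · simp

lemma cf_succ {s : Multiset ℕ} (hs : 0 ∉ s) (m : ℕ) :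
    cf (m + 1) s = ∑ p ∈ s.toFinset, cf m (s.erase p) := by
  unfold cf
  rw [pow_succ', PowerSeries.coeff_mul, MvPolynomial.coeff_sum,
    Finset.Nat.sum_antidiagonal_eq_sum_range_succ_mk]
  have hsub : s.toFinset ⊆ Finset.range (s.sum + 1) := by
    intro p hp
    rw [Finset.mem_range]
    exact Nat.lt_succ_of_le (mem_le_sum (Multiset.mem_toFinset.1 hp))
  rw [← Finset.sum_subset hsub]
  · refine Finset.sum_congr rfl fun p hp => ?_
    have hpmem : p ∈ s := Multiset.mem_toFinset.1 hp
    have hp0 : p ≠ 0 := fun h => hs (h ▸ hpmem)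
    have hcoeff : PowerSeries.coeff p uSeries = MvPolynomial.X p := by
      rw [uSeries, PowerSeries.coeff_mk, if_neg hp0]
    rw [hcoeff]
    have hsplit : s.toFinsupp = Finsupp.single p 1 + (s.erase p).toFinsupp := by
      have h : s = {p} + s.erase p := by
        rw [Multiset.singleton_add, Multiset.cons_erase hpmem]
      conv_lhs => rw [h]
      rw [Multiset.toFinsupp_add, Multiset.toFinsupp_singleton]
    have hsum : s.sum - p = (s.erase p).sum := by
      have : s.sum = p + (s.erase p).sum := by
        rw [← Multiset.sum_cons, Multiset.cons_erase hpmem]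
      omega
    rw [hsplit, MvPolynomial.coeff_X_mul, hsum]
  · intro k _ hk
    by_cases hk0 : k = 0
    · subst hk0
      simp [uSeries, PowerSeries.coeff_mk]
    · have hcoeff : PowerSeries.coeff k uSeries = MvPolynomial.X k := by
        rw [uSeries, PowerSeries.coeff_mk, if_neg hk0]
      rw [hcoeff, MvPolynomial.coeff_X_mul', if_neg]
      rw [Multiset.toFinsupp_support]
      exact hk

lemma cf_mul_Pfac : ∀ (m : ℕ) (s : Multiset ℕ), 0 ∉ s →
    cf m s * (Pfac s : ℚ) = if m = Multiset.card s then (m.factorial : ℚ) else 0 := by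
  intro m
  induction m with
  | zero =>
    intro s hs
    rw [cf_zero hs]
    rcases eq_or_ne s 0 with rfl | h
    · simp
    · rw [if_neg h, if_neg, zero_mul]
      intro hc
      exact h (Multiset.card_eq_zero.1 hc.symm)
  | succ m ih =>
    intro s hs
    rcases eq_or_ne s 0 with rfl | hne
    · rw [if_neg (by simp)]
      simp [cf_succ hs]
    · have hcard : 1 ≤ Multiset.card s := by
        rwa [Nat.one_le_iff_ne_zero, Ne, Multiset.card_eq_zero]
      rw [cf_succ hs, Finset.sum_mul]
      have hterm : ∀ p ∈ s.toFinset,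
          cf m (s.erase p) * (Pfac s : ℚ)
          = (s.count p : ℚ) * (if m = Multiset.card s - 1 then (m.factorial : ℚ) else 0) := by
        intro p hp
        have hpmem : p ∈ s := Multiset.mem_toFinset.1 hp
        have herase : 0 ∉ s.erase p := fun h => hs (Multiset.mem_of_mem_erase h)
        have := ih (s.erase p) herase
        rw [Multiset.card_erase_of_mem hpmem] at this
        rw [Pfac_erase hpmem]
        push_cast
        rw [← mul_assoc, mul_comm (cf m (s.erase p)) ((s.count p : ℚ)), mul_assoc, this]
        rfl
      rw [Finset.sum_congr rfl hterm, ← Finset.sum_mul]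
      have hcnt : ∑ p ∈ s.toFinset, (s.count p : ℚ) = (Multiset.card s : ℚ) := by
        rw [← Nat.cast_sum]
        norm_cast
        exact Multiset.toFinset_sum_count_eq s
      rw [hcnt]
      by_cases h : m + 1 = Multiset.card s
      · rw [if_pos h, if_pos (by omega), ← h]
        push_cast [Nat.factorial_succ]
        ring
      · rw [if_neg h, if_neg (by omega), mul_zero]

lemma Scoef_eq {s : Multiset ℕ} (hs : 0 ∉ s) : Scoef s = (Pfac s : ℚ)⁻¹ := by
  have hP : (Pfac s : ℚ) ≠ 0 := Nat.cast_ne_zero.2 (Pfac_pos s).ne'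
  have key : Scoef s * (Pfac s : ℚ) = 1 := by
    unfold Scoef expPS
    rw [PowerSeries.coeff_mk, MvPolynomial.coeff_sum, Finset.sum_mul]
    have : ∀ m ∈ Finset.range (s.sum + 1),
        MvPolynomial.coeff s.toFinsupp
          ((m.factorial : ℚ)⁻¹ • PowerSeries.coeff s.sum (uSeries ^ m))
          * (Pfac s : ℚ)
        = if m = Multiset.card s then 1 else 0 := by
      intro m _
      rw [MvPolynomial.coeff_smul, smul_eq_mul, mul_assoc]
      have := cf_mul_Pfac m s hs
      unfold cf at this
      rw [this]
      split_ifs with h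
      · rw [inv_mul_cancel₀ (Nat.cast_ne_zero.2 (Nat.factorial_pos m).ne')]
      · rw [mul_zero]
    rw [Finset.sum_congr rfl this, Finset.sum_ite_eq' (Finset.range (s.sum + 1))
      (Multiset.card s) (fun _ => (1:ℚ)), if_pos]
    rw [Finset.mem_range]
    exact Nat.lt_succ_of_le (card_le_sum hs)
  field_simp at key ⊢
  linarith [key]

lemma count_powerset_q : ∀ (s t : Multiset ℕ), t ≤ s →
    (Multiset.count t s.powerset : ℚ) * ((Pfac t : ℚ) * (Pfac (s - t) : ℚ)) = (Pfac s : ℚ) := by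
  intro s
  induction s using Multiset.induction_on with
  | empty =>
    intro t ht
    rw [Multiset.le_zero.1 ht]
    simp [Multiset.powerset_zero]
  | cons a s ih =>
    intro t ht
    have hcount : ∀ b, Multiset.count b t ≤ Multiset.count b (a ::ₘ s) :=
      fun b => Multiset.le_iff_count.1 ht b
    rw [Multiset.powerset_cons, Multiset.count_add]
    by_cases ha : a ∈ t
    · set t' := t.erase a with ht'
      have hte : a ::ₘ t' = t := Multiset.cons_erase ha
      have hmap : Multiset.count t (Multiset.map (Multiset.cons a) s.powerset)
          = Multiset.count t' s.powerset := by
        rw [← hte, Multiset.count_map_eq_count' _ _ (fun x y h => (Multiset.cons_inj_right a).1 h) t']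
      have ht'le : t' ≤ s := by
        rw [← Multiset.cons_le_cons_iff a, hte]
        exact ht
      have hta : 1 ≤ t.count a := Multiset.one_le_count_iff_mem.2 ha
      have ht'a : t'.count a = t.count a - 1 := by
        rw [ht', Multiset.count_erase_self]
      by_cases hts : t ≤ s
      · -- both terms contribute
        have h1 := ih t hts
        have h2 := ih t' ht'le
        have hsa : t.count a ≤ s.count a := Multiset.le_iff_count.1 hts a
        have he1 : (a ::ₘ s) - t = s - t' := by
          rw [Multiset.ext]
          intro b
          simp only [Multiset.count_sub, Multiset.count_cons]
          rcases eq_or_ne b a with rfl | hb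
          · simp [ht'a]; omega
          · simp [hb, ht', Multiset.count_erase_of_ne hb]
        have he2 : s - t' = a ::ₘ (s - t) := by
          rw [Multiset.ext]
          intro b
          simp only [Multiset.count_sub, Multiset.count_cons]
          rcases eq_or_ne b a with rfl | hb
          · simp [ht'a]; omega
          · simp [hb, ht', Multiset.count_erase_of_ne hb]
        have hPt : (Pfac t : ℚ) = (t.count a : ℚ) * (Pfac t' : ℚ) := by
          rw [Pfac_erase ha]; push_cast; ring
        have hPst' : (Pfac (s - t') : ℚ)
            = ((s.count a : ℚ) - (t.count a : ℚ) + 1) * (Pfac (s - t) : ℚ) := by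
          rw [he2, Pfac_cons, Multiset.count_sub]
          push_cast [Nat.cast_sub hsa]
          ring
        have hPcons : (Pfac (a ::ₘ s) : ℚ) = ((s.count a : ℚ) + 1) * (Pfac s : ℚ) := by
          rw [Pfac_cons]; push_cast; ring
        rw [he1, hmap]
        rw [hPt] at h1
        rw [hPst'] at h2
        rw [hPcons, hPt, hPst']
        push_cast
        linear_combination ((Multiset.count a s : ℚ) - (Multiset.count a t : ℚ) + 1) * h1
          + (Multiset.count a t : ℚ) * h2
      · -- t not ≤ s : count t s.powerset = 0
        have hc0 : Multiset.count t s.powerset = 0 :=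
          Multiset.count_eq_zero.2 (fun h => hts (Multiset.mem_powerset.1 h))
        have hta2 : t.count a = s.count a + 1 := by
          have h1 := hcount a
          rw [Multiset.count_cons_self] at h1
          by_contra hne2
          apply hts
          rw [Multiset.le_iff_count]
          intro b
          have := hcount b
          rcases eq_or_ne b a with rfl | hb
          · omega
          · rwa [Multiset.count_cons_of_ne hb] at this
        have ht'le2 : t' ≤ s := ht'le
        have h2 := ih t' ht'le2
        have he1 : (a ::ₘ s) - t = s - t' := by
          rw [Multiset.ext]
          intro b
          simp only [Multiset.count_sub, Multiset.count_cons]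
          rcases eq_or_ne b a with rfl | hb
          · simp [ht'a]; omega
          · simp [hb, ht', Multiset.count_erase_of_ne hb]
        have hPt : (Pfac t : ℚ) = ((s.count a : ℚ) + 1) * (Pfac t' : ℚ) := by
          rw [Pfac_erase ha, hta2]; push_cast; ring
        have hPcons : (Pfac (a ::ₘ s) : ℚ) = ((s.count a : ℚ) + 1) * (Pfac s : ℚ) := by
          rw [Pfac_cons]; push_cast; ring
        rw [he1, hmap, hc0, hPcons, hPt]
        push_cast
        linear_combination ((Multiset.count a s : ℚ) + 1) * h2
    · -- a ∉ t
      have hmap : Multiset.count t (Multiset.map (Multiset.cons a) s.powerset) = 0 := by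
        rw [Multiset.count_eq_zero]
        intro hc
        obtain ⟨u, _, hu⟩ := Multiset.mem_map.1 hc
        exact ha (hu ▸ Multiset.mem_cons_self a u)
      have hts : t ≤ s := by
        rw [Multiset.le_iff_count]
        intro b
        have := hcount b
        rcases eq_or_ne b a with rfl | hb
        · simp [Multiset.count_eq_zero.2 ha]
        · rwa [Multiset.count_cons_of_ne hb] at this
      have h1 := ih t hts
      have hta0 : t.count a = 0 := Multiset.count_eq_zero.2 ha
      have he : (a ::ₘ s) - t = a ::ₘ (s - t) := by
        rw [Multiset.ext]
        intro b
        simp only [Multiset.count_sub, Multiset.count_cons]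
        rcases eq_or_ne b a with rfl | hb
        · simp [hta0]
        · simp [hb]
      have hcnt : (s - t).count a = s.count a := by
        rw [Multiset.count_sub, hta0, Nat.sub_zero]
      rw [he, hmap, Pfac_cons, Pfac_cons, hcnt]
      push_cast
      linear_combination ((Multiset.count a s : ℚ) + 1) * h1

/-! ### the alternating sum over the powerset -/

/-- falling-type product -/
noncomputable def pfall (j : ℕ) (c : ℚ) : ℚ := ∏ k ∈ Finset.Icc 1 j, (c - k)

/-- the summand -/
noncomputable def Gfun (m j : ℕ) (t : Multiset ℕ) : ℚ :=
  (-1) ^ (Multiset.card t) * (t.sum : ℚ) ^ m * pfall j (Multiset.card t)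

@[simp] lemma pfall_zero (c : ℚ) : pfall 0 c = 1 := by simp [pfall]

lemma pfall_succ (j : ℕ) (c : ℚ) : pfall (j + 1) c = pfall j c * (c - (j + 1)) := by
  rw [pfall, Finset.prod_Icc_succ_top (by omega)]
  push_cast
  rfl

lemma pfall_succ_arg (j : ℕ) (c : ℚ) :
    pfall j (c + 1) = pfall j c + j * pfall (j - 1) c := by
  induction j with
  | zero => simp
  | succ j ih =>
    simp only [pfall_succ, Nat.add_sub_cancel]
    rw [ih]
    rcases j with _ | j'
    · simp
    · simp only [Nat.add_sub_cancel, pfall_succ]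
      push_cast
      ring

lemma Gfun_cons (a : ℕ) (t : Multiset ℕ) (m j : ℕ) :
    Gfun m j t + Gfun m j (a ::ₘ t)
      = -(j : ℚ) * Gfun m (j - 1) t
        - ∑ i ∈ Finset.range m, (m.choose i : ℚ) * (a : ℚ) ^ (m - i)
            * (Gfun i j t + (j : ℚ) * Gfun i (j - 1) t) := by
  have hexp : ((a : ℚ) + (t.sum : ℚ)) ^ m
      = (t.sum : ℚ) ^ m + ∑ i ∈ Finset.range m,
          (t.sum : ℚ) ^ i * (a : ℚ) ^ (m - i) * (m.choose i : ℚ) := by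
    rw [add_comm, add_pow, Finset.sum_range_succ]
    simp [add_comm]
  have hsum : ∑ i ∈ Finset.range m, (m.choose i : ℚ) * (a : ℚ) ^ (m - i)
        * (Gfun i j t + (j : ℚ) * Gfun i (j - 1) t)
      = ((-1) ^ (Multiset.card t)
          * (pfall j (Multiset.card t) + (j : ℚ) * pfall (j - 1) (Multiset.card t)))
        * ∑ i ∈ Finset.range m,
            (t.sum : ℚ) ^ i * (a : ℚ) ^ (m - i) * (m.choose i : ℚ) := by
    rw [Finset.mul_sum]
    refine Finset.sum_congr rfl fun i _ => ?_
    simp only [Gfun]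
    ring
  have hG1 : Gfun m j (a ::ₘ t)
      = (-1) ^ (Multiset.card t) * (-1) * ((a : ℚ) + (t.sum : ℚ)) ^ m
        * (pfall j (Multiset.card t) + (j : ℚ) * pfall (j - 1) (Multiset.card t)) := by
    simp only [Gfun, Multiset.card_cons, Multiset.sum_cons, Nat.cast_add, Nat.cast_one, pow_succ]
    rw [pfall_succ_arg]
  rw [hG1, hsum, hexp]
  simp only [Gfun]
  ring

lemma msum_sub (P : Multiset (Multiset ℕ)) (f g : Multiset ℕ → ℚ) :
    (P.map (fun t => f t - g t)).sum = (P.map f).sum - (P.map g).sum := by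
  induction P using Multiset.induction_on with
  | empty => simp
  | cons a s ih => simp [ih]; ring

lemma msum_lin (P : Multiset (Multiset ℕ)) (f g : Multiset ℕ → ℚ) (c d : ℚ) :
    (P.map (fun t => c * f t + d * g t)).sum = c * (P.map f).sum + d * (P.map g).sum := by
  induction P using Multiset.induction_on with
  | empty => simp
  | cons a s ih => simp [ih]; ring

lemma msum_exchange (P : Multiset (Multiset ℕ)) (F : ℕ → Multiset ℕ → ℚ) (I : Finset ℕ) :
    (P.map (fun t => ∑ i ∈ I, F i t)).sum = ∑ i ∈ I, (P.map (F i)).sum := by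
  induction P using Multiset.induction_on with
  | empty => simp
  | cons a s ih => simp [ih, Finset.sum_add_distrib]

lemma alt_sum : ∀ (s : Multiset ℕ) (m j : ℕ), m + j + 1 ≤ Multiset.card s →
    ((s.powerset.map (Gfun m j)).sum = 0) := by
  intro s
  induction s using Multiset.induction_on with
  | empty => intro m j h; simp at h
  | cons a s ih =>
    intro m j h
    rw [Multiset.card_cons] at h
    have hmj : m + j ≤ Multiset.card s := by omega
    have kill : ∀ m', m' + j ≤ Multiset.card s →
        (j : ℚ) * ((s.powerset.map (Gfun m' (j - 1))).sum) = 0 := by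
      intro m' hm'
      rcases Nat.eq_zero_or_pos j with rfl | hj
      · simp
      · rw [ih m' (j - 1) (by omega), mul_zero]
    rw [Multiset.powerset_cons, Multiset.map_add, Multiset.sum_add, Multiset.map_map]
    have comb : (Multiset.map (Gfun m j) s.powerset).sum
          + (Multiset.map (Gfun m j ∘ Multiset.cons a) s.powerset).sum
        = (Multiset.map (fun t => Gfun m j t + Gfun m j (a ::ₘ t)) s.powerset).sum := by
      rw [← Multiset.sum_map_add]
      rfl
    rw [comb, Multiset.map_congr rfl (fun t _ => Gfun_cons a t m j), msum_sub]
    have h1 : (Multiset.map (fun t => -(j : ℚ) * Gfun m (j - 1) t) s.powerset).sum = 0 := by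
      rw [Multiset.sum_map_mul_left]
      have := kill m hmj
      rw [show (-(j:ℚ)) * (Multiset.map (Gfun m (j-1)) s.powerset).sum
          = -((j:ℚ) * (Multiset.map (Gfun m (j-1)) s.powerset).sum) by ring, this, neg_zero]
    have h2 : (Multiset.map (fun t => ∑ i ∈ Finset.range m, (m.choose i : ℚ) * (a : ℚ) ^ (m - i)
            * (Gfun i j t + (j : ℚ) * Gfun i (j - 1) t)) s.powerset).sum = 0 := by
      rw [msum_exchange]
      refine Finset.sum_eq_zero fun i hi => ?_
      have hi' : i < m := Finset.mem_range.1 hi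
      have hme : Multiset.map (fun t => (m.choose i : ℚ) * (a : ℚ) ^ (m - i)
            * (Gfun i j t + (j : ℚ) * Gfun i (j - 1) t)) s.powerset
          = Multiset.map (fun t => ((m.choose i : ℚ) * (a : ℚ) ^ (m - i)) * Gfun i j t
              + (((m.choose i : ℚ) * (a : ℚ) ^ (m - i)) * (j : ℚ)) * Gfun i (j - 1) t)
              s.powerset :=
        Multiset.map_congr rfl fun t _ => by ring
      rw [hme, msum_lin, ih i j (by omega), mul_zero, zero_add, mul_assoc,
        kill i (by omega), mul_zero]
    rw [h1, h2, sub_zero]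

/-- For a partition `σ_d` of `d ≥ 1` and nonnegative integers `m, j` with
`m + j ≤ l(σ_d) - 1`,
`∑ (-1)^{l(σ_f)} f^m (∏_{k=1}^{j} (l(σ_f) - k)) S(σ_f) S(σ_{d-f}) = 0`. -/
theorem schur_splitting_sum_with_falling_eq_zero (d : ℕ) (hd : 1 ≤ d)
    (σ : Nat.Partition d) (m j : ℕ) (hmj : m + j + 1 ≤ Multiset.card σ.parts) :
    ∑ t ∈ σ.parts.powerset.toFinset,
      (-1 : ℚ) ^ Multiset.card t * (t.sum : ℚ) ^ m *
        (∏ k ∈ Finset.Icc 1 j, ((Multiset.card t : ℚ) - k)) *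
        Scoef t * Scoef (σ.parts - t)
      = 0 := by
  set s := σ.parts with hsdef
  have hs : (0 : ℕ) ∉ s := fun h => absurd (σ.parts_pos h) (lt_irrefl 0)
  have hPs : (Pfac s : ℚ) ≠ 0 := Nat.cast_ne_zero.2 (Pfac_pos s).ne'
  have hterm : ∀ t ∈ s.powerset.toFinset,
      (-1 : ℚ) ^ Multiset.card t * (t.sum : ℚ) ^ m *
        (∏ k ∈ Finset.Icc 1 j, ((Multiset.card t : ℚ) - k)) *
        Scoef t * Scoef (s - t)
      = (s.powerset.count t) • (Gfun m j t * (Pfac s : ℚ)⁻¹) := by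
    intro t htm
    have hts : t ≤ s := Multiset.mem_powerset.1 (Multiset.mem_toFinset.1 htm)
    have h0t : (0:ℕ) ∉ t := fun h => hs (Multiset.mem_of_le hts h)
    have h0st : (0:ℕ) ∉ s - t := fun h => hs (Multiset.mem_of_le tsub_le_self h)
    have h1 : (Pfac t : ℚ) ≠ 0 := Nat.cast_ne_zero.2 (Pfac_pos t).ne'
    have h2 : (Pfac (s - t) : ℚ) ≠ 0 := Nat.cast_ne_zero.2 (Pfac_pos _).ne'
    have hc := count_powerset_q s t hts
    have key : (Pfac t : ℚ)⁻¹ * (Pfac (s - t) : ℚ)⁻¹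
        = (Multiset.count t s.powerset : ℚ) * (Pfac s : ℚ)⁻¹ := by
      field_simp
      linear_combination -hc
    rw [Scoef_eq h0t, Scoef_eq h0st, nsmul_eq_mul]
    simp only [Gfun, pfall]
    linear_combination ((-1:ℚ) ^ (Multiset.card t) * (t.sum : ℚ) ^ m
      * (∏ k ∈ Finset.Icc 1 j, ((Multiset.card t : ℚ) - k))) * key
  rw [Finset.sum_congr rfl hterm, ← Finset.sum_multiset_map_count]
  rw [Multiset.sum_map_mul_right, alt_sum s m j hmj, zero_mul]
end

section
/- Let N, k be positive integers with k ≥ N, and let d, f, m be integers with d > m ≥ 0 and f ≥ 1. Suppose G : ℤ → R (R a commutative ring) satisfies G(1 + (k-N)d) = 0 and the symmetry G(n) = G(N - 1 + (k-N)d - n) for all n. Define G̃(n) = ∑_{j=0}^{(k-N)f} G(n - j) - ∑_{j=0}^{(k-N)f} G(1 + (k-N)(d+f) - j). Then G̃ satisfies: (a) G̃(2 + (k-N)(d+f)) = G(2 + (k-N)(d+f)); (b) the symmetry G̃(n) = G̃(N - 1 + (k-N)(d+f) - n) for all n; (c) G̃(1 + (k-N)(d+f)) = 0. -/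
/-- Telescoping lemma: shifting the argument by one in a sum over `Icc 0 M`. -/
lemma tildeG_sum_shift {R : Type*} [CommRing R] (G : ℤ → R) (M c : ℤ) (hM : 0 ≤ M) :
    ∑ j ∈ Finset.Icc (0 : ℤ) M, G (c + 1 - j)
      = G (c + 1) + (∑ j ∈ Finset.Icc (0 : ℤ) M, G (c - j)) - G (c - M) := by
  have h0 : Finset.Icc (0 : ℤ) M = insert 0 (Finset.Icc 1 M) := by
    ext x; simp only [Finset.mem_Icc, Finset.mem_insert]; omega
  have h1 : Finset.Icc (0 : ℤ) M = insert M (Finset.Icc 0 (M - 1)) := by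
    ext x; simp only [Finset.mem_Icc, Finset.mem_insert]; omega
  have h2 : ∑ j ∈ Finset.Icc (1 : ℤ) M, G (c + 1 - j)
      = ∑ j ∈ Finset.Icc (0 : ℤ) (M - 1), G (c - j) := by
    refine Finset.sum_equiv (Equiv.subRight (1 : ℤ)) ?_ ?_
    · intro i; simp only [Finset.mem_Icc, Equiv.subRight_apply]; omega
    · intro i _; simp only [Equiv.subRight_apply]; congr 1; ring
  conv_rhs => rw [h1, Finset.sum_insert (by simp [Finset.mem_Icc])]
  rw [h0, Finset.sum_insert (by simp), h2]
  simp only [sub_zero]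
  have hfin : ∀ A B S : R, A + S = A + (B + S) - B := by intros; ring
  exact hfin _ _ _


/-- Properties of the inductively defined factor `G̃` built from a function
`G : ℤ → R` with the vanishing and symmetry properties of
`G_{d-m}^{N,k,d}(·;σ_m)`. -/
theorem tildeG_properties {R : Type*} [CommRing R]
    (N k : ℕ) (hN : 1 ≤ N) (hk : N ≤ k)
    (d f m : ℤ) (hdm : m < d) (hm : 0 ≤ m) (hf : 1 ≤ f)
    (G : ℤ → R)
    (hG0 : G (1 + ((k : ℤ) - N) * d) = 0)
    (hGsym : ∀ n : ℤ, G n = G ((N : ℤ) - 1 + ((k : ℤ) - N) * d - n)) :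
    (((∑ j ∈ Finset.Icc (0 : ℤ) (((k : ℤ) - N) * f),
        G (2 + ((k : ℤ) - N) * (d + f) - j)) -
      ∑ j ∈ Finset.Icc (0 : ℤ) (((k : ℤ) - N) * f),
        G (1 + ((k : ℤ) - N) * (d + f) - j)) =
      G (2 + ((k : ℤ) - N) * (d + f))) ∧
    (∀ n : ℤ,
      ((∑ j ∈ Finset.Icc (0 : ℤ) (((k : ℤ) - N) * f), G (n - j)) -
        ∑ j ∈ Finset.Icc (0 : ℤ) (((k : ℤ) - N) * f),
          G (1 + ((k : ℤ) - N) * (d + f) - j)) =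
      ((∑ j ∈ Finset.Icc (0 : ℤ) (((k : ℤ) - N) * f),
          G ((N : ℤ) - 1 + ((k : ℤ) - N) * (d + f) - n - j)) -
        ∑ j ∈ Finset.Icc (0 : ℤ) (((k : ℤ) - N) * f),
          G (1 + ((k : ℤ) - N) * (d + f) - j))) ∧
    (((∑ j ∈ Finset.Icc (0 : ℤ) (((k : ℤ) - N) * f),
        G (1 + ((k : ℤ) - N) * (d + f) - j)) -
      ∑ j ∈ Finset.Icc (0 : ℤ) (((k : ℤ) - N) * f),
        G (1 + ((k : ℤ) - N) * (d + f) - j)) = 0) := by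
  have hKnn : (0 : ℤ) ≤ (k : ℤ) - N := sub_nonneg.mpr (by exact_mod_cast hk)
  have hM : (0 : ℤ) ≤ ((k : ℤ) - N) * f := mul_nonneg hKnn (by linarith)
  refine ⟨?_, ?_, sub_self _⟩
  · have e1 : ∀ j : ℤ, 2 + ((k : ℤ) - N) * (d + f) - j
        = (1 + ((k : ℤ) - N) * (d + f)) + 1 - j := fun j => by ring
    simp only [e1]
    rw [tildeG_sum_shift G _ _ hM]
    have e2 : (1 + ((k : ℤ) - N) * (d + f)) - ((k : ℤ) - N) * f
        = 1 + ((k : ℤ) - N) * d := by ring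
    have e3 : (1 + ((k : ℤ) - N) * (d + f)) + 1
        = 2 + ((k : ℤ) - N) * (d + f) := by ring
    rw [e2, e3, hG0]
    ring
  · intro n
    have key : ∑ j ∈ Finset.Icc (0 : ℤ) (((k : ℤ) - N) * f), G (n - j)
        = ∑ j ∈ Finset.Icc (0 : ℤ) (((k : ℤ) - N) * f),
            G ((N : ℤ) - 1 + ((k : ℤ) - N) * (d + f) - n - j) := by
      refine Finset.sum_equiv (Equiv.subLeft (((k : ℤ) - N) * f)) ?_ ?_
      · intro i; simp only [Finset.mem_Icc, Equiv.subLeft_apply]; omega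
      · intro i _
        rw [hGsym (n - i)]
        simp only [Equiv.subLeft_apply]
        congr 1; ring
    rw [key]
end

section
/- Let b_1, b_2, ... be indeterminates and define, for each d ≥ 1, u_d = Res_{z=0}( z^{-d-1} exp(-d ∑_{j≥1} (b_j/j) z^j) ). Then symmetrically b_d = Res_{z=0}( z^{-d-1} exp(-d ∑_{j≥1} (u_j/j) z^j) ) for all d ≥ 1; i.e., the transformation (b_j) ↦ (u_j) given by these residues is an involution on sequences in a ℚ-algebra. -/
open PowerSeries Finset
set_option linter.unusedSectionVars false
set_option linter.unusedVariables false
set_option maxHeartbeats 1000000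

namespace LagAux

variable {R : Type*} [CommRing R] [Algebra ℚ R]

lemma nsmul_cancel {n : ℕ} (hn : n ≠ 0) {x y : R} (h : n • x = n • y) : x = y := by
  have h' : ((n : ℚ)) • x = ((n : ℚ)) • y := by
    rw [Nat.cast_smul_eq_nsmul, Nat.cast_smul_eq_nsmul]; exact h
  have hn' : ((n : ℚ)) ≠ 0 := Nat.cast_ne_zero.mpr hn
  have := congrArg (fun z => ((n : ℚ))⁻¹ • z) h'
  simpa [smul_smul, inv_mul_cancel₀ hn'] using this

lemma coeff_pow_lt {f : R⟦X⟧} (hf : constantCoeff f = 0) :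
    ∀ {m n : ℕ}, n < m → coeff n (f ^ m) = 0 := by
  intro m
  induction m with
  | zero => intro n hn; omega
  | succ m ih =>
    intro n hn
    rw [pow_succ, mul_comm, coeff_mul]
    apply Finset.sum_eq_zero
    rintro ⟨i, j⟩ hij
    rw [Finset.HasAntidiagonal.mem_antidiagonal] at hij
    rcases Nat.eq_zero_or_pos i with hi | hi
    · subst hi
      simp [coeff_zero_eq_constantCoeff, hf]
    · have : j < m := by omega
      rw [ih this, mul_zero]

lemma X_mul_cancel {p q : R⟦X⟧} (h : X * p = X * q) : p = q := by
  ext n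
  have := congrArg (coeff (n + 1)) h
  rwa [coeff_succ_X_mul, coeff_succ_X_mul] at this

lemma coeff_expPS_ext {f : R⟦X⟧} (hf : constantCoeff f = 0) {n N : ℕ} (hn : n ≤ N) :
    coeff n (expPS f) = ∑ m ∈ range (N + 1), ((m.factorial : ℚ)⁻¹) • coeff n (f ^ m) := by
  rw [expPS, coeff_mk]
  apply Finset.sum_subset
  · exact Finset.range_subset_range.mpr (by omega)
  · intro m _ hm
    rw [Finset.mem_range, not_lt] at hm
    rw [coeff_pow_lt hf (by omega), smul_zero]

lemma constantCoeff_expPS {f : R⟦X⟧} (hf : constantCoeff f = 0) :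
    constantCoeff (expPS f) = 1 := by
  rw [← coeff_zero_eq_constantCoeff_apply, expPS, coeff_mk]
  simp

lemma expPS_zero : expPS (0 : R⟦X⟧) = 1 := by
  ext n
  rw [expPS, coeff_mk]
  rcases Nat.eq_zero_or_pos n with h | h
  · subst h; simp
  · rw [Finset.sum_eq_zero, coeff_one, if_neg (by omega)]
    intro m hm
    rcases Nat.eq_zero_or_pos m with h0 | h0
    · subst h0
      simp only [pow_zero, coeff_one, if_neg (by omega : ¬ n = 0), smul_zero]
    · rw [zero_pow (by omega), map_zero, smul_zero]

lemma derivative_expPS {f : R⟦X⟧} (hf : constantCoeff f = 0) :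
    d⁄dX R (expPS f) = d⁄dX R f * expPS f := by
  ext n
  rw [coeff_derivative, coeff_expPS_ext hf (le_refl (n+1))]
  have key : ∀ m : ℕ, ((m.factorial : ℚ)⁻¹) • coeff n (d⁄dX R f * f ^ m)
      = (((m+1).factorial : ℚ)⁻¹) • (coeff (n+1) (f ^ (m+1)) * (n+1)) := by
    intro m
    have hD : d⁄dX R (f ^ (m+1)) = (m+1) • (f ^ m * d⁄dX R f) := by
      rw [Derivation.leibniz_pow]
      simp only [smul_eq_mul, Nat.add_sub_cancel]
    have h1 : coeff (n+1) (f ^ (m+1)) * (n+1) = coeff n (d⁄dX R (f ^ (m+1))) := by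
      rw [coeff_derivative]
    rw [h1, hD, map_nsmul]
    rw [← Nat.cast_smul_eq_nsmul ℚ, smul_smul]
    rw [mul_comm (d⁄dX R f) (f ^ m)]
    congr 1
    rw [Nat.factorial_succ]
    push_cast
    rw [mul_comm ((m:ℚ)+1) _, mul_inv]
    field_simp
  rw [coeff_mul]
  have hR : ∀ p ∈ Finset.HasAntidiagonal.antidiagonal n,
      coeff p.1 (d⁄dX R f) * coeff p.2 (expPS f)
      = ∑ m ∈ range (n+1), ((m.factorial : ℚ)⁻¹) •
          (coeff p.1 (d⁄dX R f) * coeff p.2 (f ^ m)) := by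
    intro p hp
    rw [coeff_expPS_ext hf (Finset.HasAntidiagonal.antidiagonal.snd_le hp), Finset.mul_sum]
    exact Finset.sum_congr rfl fun m _ => by rw [mul_smul_comm]
  rw [Finset.sum_congr rfl hR, Finset.sum_comm]
  have : ∀ m ∈ range (n+1),
      (∑ p ∈ Finset.HasAntidiagonal.antidiagonal n, ((m.factorial : ℚ)⁻¹) •
        (coeff p.1 (d⁄dX R f) * coeff p.2 (f ^ m)))
      = (((m+1).factorial : ℚ)⁻¹) • (coeff (n+1) (f ^ (m+1)) * (n+1)) := by
    intro m _
    rw [← Finset.smul_sum, ← coeff_mul, key m]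
  rw [Finset.sum_congr rfl this]
  rw [Finset.sum_mul, Finset.sum_range_succ']
  simp only [Nat.factorial_zero, Nat.cast_one, inv_one, one_smul, pow_zero]
  rw [coeff_one, if_neg (Nat.succ_ne_zero n), zero_mul, add_zero]
  exact (Finset.sum_congr rfl fun m _ => by rw [smul_mul_assoc]).symm

lemma ode_unique {a y z : R⟦X⟧} (hy : d⁄dX R y = a * y) (hz : d⁄dX R z = a * z)
    (h0 : constantCoeff y = constantCoeff z) : y = z := by
  ext n
  induction n using Nat.strong_induction_on with
  | _ n ih =>
    cases n with
    | zero => simpa [coeff_zero_eq_constantCoeff] using h0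
    | succ n =>
      have hy' := congrArg (coeff n) hy
      have hz' := congrArg (coeff n) hz
      rw [coeff_derivative, coeff_mul] at hy' hz'
      have hsum : ∑ p ∈ Finset.HasAntidiagonal.antidiagonal n, coeff p.1 a * coeff p.2 y
          = ∑ p ∈ Finset.HasAntidiagonal.antidiagonal n, coeff p.1 a * coeff p.2 z := by
        refine Finset.sum_congr rfl fun p hp => ?_
        rw [ih p.2 (by have := Finset.HasAntidiagonal.antidiagonal.snd_le hp; omega)]
      have h1 : coeff (n+1) y * ((n : R)+1) = coeff (n+1) z * ((n : R)+1) := by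
        rw [hy', hz', hsum]
      have e : ∀ x : R, x * ((n:R)+1) = (n+1) • x := by
        intro x; rw [nsmul_eq_mul]; push_cast; ring
      rw [e, e] at h1
      exact nsmul_cancel (Nat.succ_ne_zero n) h1

lemma expPS_add {f g : R⟦X⟧} (hf : constantCoeff f = 0) (hg : constantCoeff g = 0) :
    expPS (f + g) = expPS f * expPS g := by
  have hfg : constantCoeff (f + g) = 0 := by rw [map_add, hf, hg, add_zero]
  apply ode_unique (a := d⁄dX R f + d⁄dX R g)
  · rw [derivative_expPS hfg, map_add]
  · rw [Derivation.leibniz, derivative_expPS hf, derivative_expPS hg]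
    simp only [smul_eq_mul]; ring
  · rw [constantCoeff_expPS hfg, map_mul, constantCoeff_expPS hf, constantCoeff_expPS hg, mul_one]

lemma expPS_mul_neg {f : R⟦X⟧} (hf : constantCoeff f = 0) :
    expPS f * expPS (-f) = 1 := by
  have hnf : constantCoeff (-f) = 0 := by rw [map_neg, hf, neg_zero]
  rw [← expPS_add hf hnf, add_neg_cancel, expPS_zero]

lemma expPS_nsmul {f : R⟦X⟧} (hf : constantCoeff f = 0) (d : ℕ) :
    expPS (d • f) = expPS f ^ d := by
  induction d with
  | zero => rw [zero_smul, expPS_zero, pow_zero]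
  | succ d ih =>
    have hdf : constantCoeff (d • f) = 0 := by rw [map_nsmul, hf, smul_zero]
    rw [succ_nsmul, expPS_add hdf hf, ih, pow_succ]

/-- Substitution of `G` (with zero constant term) into `P`. -/
noncomputable def subG (G P : R⟦X⟧) : R⟦X⟧ :=
  mk fun n => ∑ k ∈ range (n + 1), coeff k P * coeff n (G ^ k)

lemma coeff_subG_ext {G : R⟦X⟧} (hG : constantCoeff G = 0) {n N : ℕ} (hn : n ≤ N)
    (P : R⟦X⟧) :
    coeff n (subG G P) = ∑ k ∈ range (N + 1), coeff k P * coeff n (G ^ k) := by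
  rw [subG, coeff_mk]
  apply Finset.sum_subset (Finset.range_subset_range.mpr (by omega))
  intro k _ hk
  rw [Finset.mem_range, not_lt] at hk
  rw [coeff_pow_lt hG (by omega), mul_zero]

lemma coeff_subG_mul {G : R⟦X⟧} (hG : constantCoeff G = 0) (P W : R⟦X⟧) (d : ℕ) :
    coeff d (subG G P * W) = ∑ k ∈ range (d + 1), coeff k P * coeff d (G ^ k * W) := by
  rw [coeff_mul]
  have h1 : ∀ p ∈ Finset.HasAntidiagonal.antidiagonal d, coeff p.1 (subG G P) * coeff p.2 W
      = ∑ k ∈ range (d + 1), coeff k P * (coeff p.1 (G ^ k) * coeff p.2 W) := by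
    intro p hp
    rw [coeff_subG_ext hG (Finset.HasAntidiagonal.antidiagonal.fst_le hp), Finset.sum_mul]
    exact Finset.sum_congr rfl fun k _ => mul_assoc _ _ _
  rw [Finset.sum_congr rfl h1, Finset.sum_comm]
  exact Finset.sum_congr rfl fun k _ => by rw [← Finset.mul_sum, ← coeff_mul]

lemma subG_one (G : R⟦X⟧) : subG G 1 = 1 := by
  ext n
  rw [subG, coeff_mk]
  rw [Finset.sum_eq_single 0]
  · simp
  · intro k _ hk
    rw [coeff_one, if_neg hk, zero_mul]
  · intro h; exact absurd (Finset.mem_range.mpr (by omega)) h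

lemma subG_X {G : R⟦X⟧} (hG : constantCoeff G = 0) : subG G X = G := by
  ext n
  rw [subG, coeff_mk, Finset.sum_eq_single 1]
  · simp
  · intro k _ hk
    rw [coeff_X, if_neg hk, zero_mul]
  · intro h
    rw [Finset.mem_range, not_lt] at h
    obtain rfl : n = 0 := by omega
    simp [coeff_zero_eq_constantCoeff, hG]

lemma subG_add (G P Q : R⟦X⟧) : subG G (P + Q) = subG G P + subG G Q := by
  ext n
  simp only [subG, coeff_mk, map_add, add_mul, Finset.sum_add_distrib]

lemma sum_tri {M : Type*} [AddCommMonoid M] (n : ℕ) (g : ℕ × ℕ → M)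
    (hg : ∀ p : ℕ × ℕ, n < p.1 + p.2 → g p = 0) :
    ∑ k ∈ range (n + 1), ∑ p ∈ Finset.HasAntidiagonal.antidiagonal k, g p
      = ∑ p ∈ range (n + 1) ×ˢ range (n + 1), g p := by
  have hdisj : (↑(range (n + 1)) : Set ℕ).PairwiseDisjoint Finset.HasAntidiagonal.antidiagonal := by
    intro a _ b _ hab
    simp only [Function.onFun, Finset.disjoint_left]
    intro p hpa hpb
    rw [Finset.HasAntidiagonal.mem_antidiagonal] at hpa hpb
    exact hab (hpa ▸ hpb ▸ rfl)
  rw [← Finset.sum_biUnion hdisj]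
  apply Finset.sum_subset
  · intro p hp
    simp only [Finset.mem_biUnion] at hp
    obtain ⟨k, hk, hpk⟩ := hp
    rw [Finset.HasAntidiagonal.mem_antidiagonal] at hpk
    rw [Finset.mem_range] at hk
    simp only [Finset.mem_product, Finset.mem_range]
    omega
  · intro p hp hnp
    apply hg
    by_contra hle
    push_neg at hle
    exact hnp (Finset.mem_biUnion.mpr ⟨p.1 + p.2, Finset.mem_range.mpr (by omega),
      Finset.HasAntidiagonal.mem_antidiagonal.mpr rfl⟩)

lemma subG_mul {G : R⟦X⟧} (hG : constantCoeff G = 0) (P Q : R⟦X⟧) :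
    subG G (P * Q) = subG G P * subG G Q := by
  ext n
  rw [coeff_subG_mul hG]
  have hR : ∀ k ∈ range (n + 1), coeff k P * coeff n (G ^ k * subG G Q)
      = ∑ j ∈ range (n + 1), coeff k P * coeff j Q * coeff n (G ^ (k + j)) := by
    intro k _
    rw [mul_comm (G ^ k), coeff_subG_mul hG, Finset.mul_sum]
    refine Finset.sum_congr rfl fun j _ => ?_
    rw [← pow_add, mul_assoc, add_comm j k]
  rw [Finset.sum_congr rfl hR]
  rw [coeff_subG_ext hG (le_refl n)]
  have hL : ∀ k ∈ range (n + 1), coeff k (P * Q) * coeff n (G ^ k)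
      = ∑ p ∈ Finset.HasAntidiagonal.antidiagonal k,
          coeff p.1 P * coeff p.2 Q * coeff n (G ^ (p.1 + p.2)) := by
    intro k _
    rw [coeff_mul, Finset.sum_mul]
    refine Finset.sum_congr rfl fun p hp => ?_
    rw [Finset.HasAntidiagonal.mem_antidiagonal.mp hp]
  rw [Finset.sum_congr rfl hL]
  rw [sum_tri n (fun p => coeff p.1 P * coeff p.2 Q * coeff n (G ^ (p.1 + p.2)))
    (fun p hp => by rw [coeff_pow_lt hG hp, mul_zero])]
  rw [Finset.sum_product]

lemma subG_pow {G : R⟦X⟧} (hG : constantCoeff G = 0) (P : R⟦X⟧) (n : ℕ) :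
    subG G (P ^ n) = subG G P ^ n := by
  induction n with
  | zero => rw [pow_zero, pow_zero, subG_one]
  | succ n ih => rw [pow_succ, pow_succ, subG_mul hG, ih]

lemma constantCoeff_subG (G P : R⟦X⟧) : constantCoeff (subG G P) = constantCoeff P := by
  rw [← coeff_zero_eq_constantCoeff_apply, ← coeff_zero_eq_constantCoeff_apply, subG, coeff_mk]
  simp

lemma derivative_subG {G : R⟦X⟧} (hG : constantCoeff G = 0) (P : R⟦X⟧) :
    d⁄dX R (subG G P) = subG G (d⁄dX R P) * d⁄dX R G := by
  ext n
  rw [coeff_derivative, coeff_subG_mul hG]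
  have key : ∀ k ∈ range (n + 1), coeff k (d⁄dX R P) * coeff n (G ^ k * d⁄dX R G)
      = coeff (k + 1) P * coeff (n + 1) (G ^ (k + 1)) * ((n : R) + 1) := by
    intro k _
    have hD : d⁄dX R (G ^ (k + 1)) = (k + 1) • (G ^ k * d⁄dX R G) := by
      rw [Derivation.leibniz_pow]
      simp only [smul_eq_mul, Nat.add_sub_cancel]
    have h2 : ((k : R) + 1) * coeff n (G ^ k * d⁄dX R G)
        = coeff (n + 1) (G ^ (k + 1)) * ((n : R) + 1) := by
      have h3 := coeff_derivative (G ^ (k + 1)) n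
      rw [hD, map_nsmul, nsmul_eq_mul] at h3
      push_cast at h3
      linear_combination h3
    rw [coeff_derivative]
    calc coeff (k + 1) P * ((k : R) + 1) * coeff n (G ^ k * d⁄dX R G)
        = coeff (k + 1) P * (((k : R) + 1) * coeff n (G ^ k * d⁄dX R G)) := by ring
      _ = coeff (k + 1) P * (coeff (n + 1) (G ^ (k + 1)) * ((n : R) + 1)) := by rw [h2]
      _ = _ := by ring
  rw [Finset.sum_congr rfl key, coeff_subG_ext hG (le_refl (n + 1)) P,
    Finset.sum_mul, Finset.sum_range_succ']
  simp only [pow_zero, coeff_one, if_neg (Nat.succ_ne_zero n), mul_zero, zero_mul, add_zero]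

/-- Coefficients of the compositional inverse of `G`, defined recursively. -/
noncomputable def finv (G : R⟦X⟧) : ℕ → R
  | 0 => 0
  | 1 => 1
  | n + 2 => - ∑ k ∈ (Finset.range (n + 2)).attach,
      finv G k.1 * coeff (n + 2) (G ^ k.1)
termination_by n => n
decreasing_by exact Finset.mem_range.mp k.2

lemma coeff_pow_self {h : R⟦X⟧} (hh : constantCoeff h = 1) (n : ℕ) :
    coeff n ((X * h) ^ n) = 1 := by
  rw [mul_pow]
  have h1 := coeff_X_pow_mul (h ^ n) n 0
  rw [Nat.zero_add] at h1
  rw [h1, coeff_zero_eq_constantCoeff_apply, map_pow, hh, one_pow]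

lemma subG_finv {h : R⟦X⟧} (hh : constantCoeff h = 1) :
    subG (X * h) (mk (finv (X * h))) = X := by
  set G := X * h with hGdef
  have hG : constantCoeff G = 0 := by
    rw [hGdef, map_mul, constantCoeff_X, zero_mul]
  ext n
  rw [subG, coeff_mk]
  match n with
  | 0 => simp [finv]
  | 1 =>
    rw [Finset.sum_range_succ, Finset.sum_range_one]
    simp only [coeff_mk]
    rw [show finv G 0 = 0 by rw [finv], show finv G 1 = 1 by rw [finv]]
    rw [coeff_pow_self hh 1]
    simp [coeff_X]
  | (n + 2) =>
    rw [Finset.sum_range_succ]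
    simp only [coeff_mk]
    rw [coeff_pow_self hh (n + 2)]
    rw [show finv G (n + 2) = - ∑ k ∈ (Finset.range (n + 2)).attach,
      finv G k.1 * coeff (n + 2) (G ^ k.1) by rw [finv]]
    rw [Finset.sum_attach (Finset.range (n + 2)) (fun k => finv G k * coeff (n + 2) (G ^ k))]
    rw [coeff_X, if_neg (by omega)]
    ring

lemma derivative_X_mul (p : R⟦X⟧) : d⁄dX R (X * p) = p + X * d⁄dX R p := by
  rw [Derivation.leibniz]
  simp only [smul_eq_mul, derivative_X, mul_one]
  ring

lemma pow_mul_pow_hinv {h hinv : R⟦X⟧} (hhi : h * hinv = 1) (a b : ℕ) :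
    h ^ a * hinv ^ (a + b) = hinv ^ b := by
  rw [pow_add, ← mul_assoc, ← mul_pow, hhi, one_pow, one_mul]

/-- Core residue computation. -/
lemma coeff_res_core {h hinv : R⟦X⟧} (hhi : h * hinv = 1) (m : ℕ) :
    coeff (m + 1) (hinv ^ (m + 1)) + coeff m (hinv ^ (m + 2) * d⁄dX R h) = 0 := by
  have hih : hinv * h = 1 := by rw [mul_comm]; exact hhi
  have e1 : h * d⁄dX R hinv + hinv * d⁄dX R h = 0 := by
    have e0 := congrArg (d⁄dX R) hhi
    rw [Derivation.leibniz] at e0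
    simpa [smul_eq_mul] using e0
  have e2 : d⁄dX R hinv = -(hinv * hinv * d⁄dX R h) := by
    linear_combination hinv * e1 - (d⁄dX R hinv) * hih
  have hDm : d⁄dX R (hinv ^ (m + 1)) = -((m + 1) • (hinv ^ (m + 2) * d⁄dX R h)) := by
    rw [Derivation.leibniz_pow, e2]
    simp only [smul_eq_mul, Nat.add_sub_cancel]
    rw [nsmul_eq_mul, nsmul_eq_mul]
    ring
  have e3 := coeff_derivative (hinv ^ (m + 1)) m
  rw [hDm] at e3
  rw [map_neg, map_nsmul] at e3
  have e4 : (m + 1) • (coeff (m + 1) (hinv ^ (m + 1)) + coeff m (hinv ^ (m + 2) * d⁄dX R h))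
      = (m + 1) • (0 : R) := by
    rw [smul_zero, smul_add]
    have : (m + 1) • coeff (m + 1) (hinv ^ (m + 1))
        = coeff (m + 1) (hinv ^ (m + 1)) * ((m : R) + 1) := by
      rw [nsmul_eq_mul]; push_cast; ring
    rw [this, ← e3]
    ring
  exact nsmul_cancel (Nat.succ_ne_zero m) e4

lemma coeff_GkW {h hinv : R⟦X⟧} (hhi : h * hinv = 1) (m k : ℕ) :
    coeff (m + k) ((X * h) ^ k * (hinv ^ (m + k + 1) * d⁄dX R (X * h)))
      = if m = 0 then 1 else 0 := by
  have key : (X * h) ^ k * (hinv ^ (m + k + 1) * d⁄dX R (X * h))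
      = X ^ k * ((h ^ (k + 1) * hinv ^ ((k + 1) + m))
          + X * ((h ^ k * hinv ^ (k + (m + 1))) * d⁄dX R h)) := by
    rw [derivative_X_mul, mul_pow]
    ring
  rw [key, pow_mul_pow_hinv hhi (k + 1) m, pow_mul_pow_hinv hhi k (m + 1)]
  rw [coeff_X_pow_mul]
  match m with
  | 0 => simp
  | m + 1 =>
    rw [if_neg (Nat.succ_ne_zero m), map_add, coeff_succ_X_mul]
    exact coeff_res_core hhi m

lemma inv_nsmul_mul {n : ℕ} (hn : n ≠ 0) (x : R) :
    (((n : ℚ))⁻¹ • x) * ((n : R)) = x := by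
  rw [mul_comm, ← nsmul_eq_mul, ← Nat.cast_smul_eq_nsmul ℚ, smul_smul,
    mul_inv_cancel₀ (Nat.cast_ne_zero.mpr hn), one_smul]

/-- The Lagrange residue formula: extraction of the `d`-th coefficient. -/
lemma coeff_subG_res {h hinv : R⟦X⟧} (hh : constantCoeff h = 1) (hhi : h * hinv = 1)
    (P : R⟦X⟧) (d : ℕ) :
    coeff d (subG (X * h) P * (hinv ^ (d + 1) * d⁄dX R (X * h))) = coeff d P := by
  have hG : constantCoeff (X * h) = 0 := by rw [map_mul, constantCoeff_X, zero_mul]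
  rw [coeff_subG_mul hG]
  have hterm : ∀ k ∈ range (d + 1),
      coeff k P * coeff d ((X * h) ^ k * (hinv ^ (d + 1) * d⁄dX R (X * h)))
      = if k = d then coeff d P else 0 := by
    intro k hk
    rw [Finset.mem_range] at hk
    obtain ⟨m, rfl⟩ : ∃ m, d = m + k := ⟨d - k, by omega⟩
    rw [coeff_GkW hhi m k]
    by_cases hm : m = 0
    · subst hm; simp
    · rw [if_neg hm, mul_zero, if_neg (by omega)]
  rw [Finset.sum_congr rfl hterm,
    Finset.sum_ite_eq' (range (d + 1)) d (fun _ => coeff d P),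
    if_pos (Finset.self_mem_range_succ d)]

end LagAux

open LagAux
/-- The residue transformation `(b_j) ↦ (u_j)`,
`u_d = [z^d] exp(-d ∑_{j≥1} (b_j/j) z^j)`, is an involution:
`b_d = [z^d] exp(-d ∑_{j≥1} (u_j/j) z^j)` for all `d ≥ 1`. -/
theorem residue_transform_involutive {R : Type*} [CommRing R] [Algebra ℚ R]
    (b u : ℕ → R)
    (hu : ∀ d : ℕ, 1 ≤ d → u d =
      PowerSeries.coeff d
        (expPS (-(d • PowerSeries.mk fun j =>
          if j = 0 then (0 : R) else (j : ℚ)⁻¹ • b j)))) :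
    ∀ d : ℕ, 1 ≤ d →
      b d =
        PowerSeries.coeff d
          (expPS (-(d • PowerSeries.mk fun j =>
            if j = 0 then (0 : R) else (j : ℚ)⁻¹ • u j))) := by
  classical
  set Sb : R⟦X⟧ := PowerSeries.mk fun j => if j = 0 then (0 : R) else (j : ℚ)⁻¹ • b j with hSb
  set Su : R⟦X⟧ := PowerSeries.mk fun j => if j = 0 then (0 : R) else (j : ℚ)⁻¹ • u j with hSu
  have hCSb : constantCoeff Sb = 0 := by
    rw [← coeff_zero_eq_constantCoeff_apply, hSb, coeff_mk, if_pos rfl]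
  have hCSu : constantCoeff Su = 0 := by
    rw [← coeff_zero_eq_constantCoeff_apply, hSu, coeff_mk, if_pos rfl]
  have hCSbneg : constantCoeff (-Sb) = 0 := by rw [map_neg, hCSb, neg_zero]
  have hCSuneg : constantCoeff (-Su) = 0 := by rw [map_neg, hCSu, neg_zero]
  set h : R⟦X⟧ := expPS Sb with hh_def
  set hinv : R⟦X⟧ := expPS (-Sb) with hinv_def
  have hh : constantCoeff h = 1 := constantCoeff_expPS hCSb
  have hhi : h * hinv = 1 := expPS_mul_neg hCSb
  have hu' : ∀ n : ℕ, 1 ≤ n → u n = PowerSeries.coeff n (hinv ^ n) := by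
    intro n hn
    rw [hu n hn]
    congr 1
    rw [← smul_neg, expPS_nsmul hCSbneg]
  -- the substitution series
  set G : R⟦X⟧ := X * h with hG_def
  have hG : constantCoeff G = 0 := by rw [hG_def, map_mul, constantCoeff_X, zero_mul]
  set k₀ : R⟦X⟧ := PowerSeries.mk fun n => finv G (n + 1) with hk0_def
  have hF0 : PowerSeries.mk (finv G) = X * k₀ := by
    ext n
    cases n with
    | zero =>
      rw [coeff_mk, show finv G 0 = 0 by rw [finv]]
      rw [coeff_zero_eq_constantCoeff_apply, map_mul, constantCoeff_X, zero_mul]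
    | succ n => rw [coeff_mk, coeff_succ_X_mul, hk0_def, coeff_mk]
  have hsig : subG G (X * k₀) = X := by rw [← hF0, hG_def]; exact subG_finv hh
  have hk0C : constantCoeff k₀ = 1 := by
    rw [← coeff_zero_eq_constantCoeff_apply, hk0_def, coeff_mk]
    rw [show finv G 1 = 1 by rw [finv]]
  set k₀inv : R⟦X⟧ := PowerSeries.invOfUnit k₀ 1 with hk0inv_def
  have hk0i : k₀ * k₀inv = 1 := by
    apply PowerSeries.mul_invOfUnit
    rw [hk0C, Units.val_one]
  have hσk₀ : subG G k₀ = hinv := by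
    have e : X * (h * subG G k₀) = X * 1 := by
      rw [mul_one]
      calc X * (h * subG G k₀) = (X * h) * subG G k₀ := by ring
        _ = subG G X * subG G k₀ := by rw [subG_X hG, hG_def]
        _ = subG G (X * k₀) := (subG_mul hG X k₀).symm
        _ = X := hsig
    have e2 : h * subG G k₀ = 1 := LagAux.X_mul_cancel e
    calc subG G k₀ = subG G k₀ * (h * hinv) := by rw [hhi, mul_one]
      _ = (h * subG G k₀) * hinv := by ring
      _ = hinv := by rw [e2, one_mul]
  have hσk₀inv : subG G k₀inv = h := by
    have e2 : hinv * subG G k₀inv = 1 := by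
      rw [← hσk₀, ← subG_mul hG, hk0i, subG_one]
    calc subG G k₀inv = subG G k₀inv * (h * hinv) := by rw [hhi, mul_one]
      _ = (hinv * subG G k₀inv) * h := by ring
      _ = h := by rw [e2, one_mul]
  have hchain : subG G (d⁄dX R (X * k₀)) * d⁄dX R G = 1 := by
    have := congrArg (d⁄dX R) hsig
    rw [derivative_subG hG, derivative_X] at this
    exact this
  -- identify k₀ with expPS Su
  have hP0 : X * d⁄dX R k₀ * k₀inv = X * d⁄dX R Su := by
    ext n
    cases n with
    | zero => simp [coeff_zero_eq_constantCoeff_apply, mul_assoc]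
    | succ n =>
      -- LHS via the residue formula
      have hres := coeff_subG_res hh hhi (X * d⁄dX R k₀ * k₀inv) (n + 1)
      rw [← hG_def] at hres
      have hσP : subG G (X * d⁄dX R k₀ * k₀inv) = (subG G (d⁄dX R (X * k₀)) - hinv) * h := by
        have hDXk : d⁄dX R (X * k₀) = k₀ + X * d⁄dX R k₀ := derivative_X_mul k₀
        rw [hDXk, subG_add, hσk₀, subG_mul hG (X * d⁄dX R k₀) k₀inv, hσk₀inv,
          subG_mul hG X (d⁄dX R k₀), subG_X hG]
        ring
      rw [hσP] at hres
      have hAhW : ((subG G (d⁄dX R (X * k₀)) - hinv) * h) * (hinv ^ (n + 1 + 1) * d⁄dX R G)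
          = (subG G (d⁄dX R (X * k₀)) * d⁄dX R G) * (h ^ 1 * hinv ^ (1 + (n + 1)))
            - (h * hinv) * (hinv ^ (n + 2) * d⁄dX R G) := by
        ring
      rw [hAhW, hchain, one_mul, pow_mul_pow_hinv hhi 1 (n + 1), hhi, one_mul] at hres
      have hsec : coeff (n + 1) (hinv ^ (n + 2) * d⁄dX R G) = 0 := by
        have hsplit : hinv ^ (n + 2) * d⁄dX R G
            = (h ^ 1 * hinv ^ (1 + (n + 1))) + X * (hinv ^ (n + 2) * d⁄dX R h) := by
          rw [hG_def, derivative_X_mul]; ring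
        rw [hsplit, pow_mul_pow_hinv hhi 1 (n + 1), map_add, coeff_succ_X_mul]
        exact coeff_res_core hhi n
      rw [map_sub, hsec, sub_zero] at hres
      rw [← hres]
      -- now compute both sides explicitly
      rw [coeff_succ_X_mul, coeff_derivative, ← hu' (n + 1) (by omega)]
      rw [hSu, coeff_mk, if_neg (Nat.succ_ne_zero n)]
      have := inv_nsmul_mul (R := R) (Nat.succ_ne_zero n) (u (n + 1))
      push_cast at this ⊢
      rw [this]
  -- identify k₀ with expPS Su via the ODE
  have hDk₀ : d⁄dX R k₀ = d⁄dX R Su * k₀ := by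
    have e : (X * d⁄dX R k₀ * k₀inv) * k₀ = (X * d⁄dX R Su) * k₀ := by rw [hP0]
    have e2 : X * d⁄dX R k₀ = X * (d⁄dX R Su * k₀) := by
      calc X * d⁄dX R k₀ = X * d⁄dX R k₀ * (k₀ * k₀inv) := by rw [hk0i, mul_one]
        _ = (X * d⁄dX R k₀ * k₀inv) * k₀ := by ring
        _ = (X * d⁄dX R Su) * k₀ := e
        _ = X * (d⁄dX R Su * k₀) := by ring
    exact LagAux.X_mul_cancel e2
  have hk₀k : k₀ = expPS Su := by
    apply ode_unique (a := d⁄dX R Su) hDk₀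
    · exact derivative_expPS hCSu
    · rw [hk0C, constantCoeff_expPS hCSu]
  have hkinv : expPS (-Su) = k₀inv := by
    calc expPS (-Su) = (k₀ * k₀inv) * expPS (-Su) := by rw [hk0i, one_mul]
      _ = (expPS Su * expPS (-Su)) * k₀inv := by rw [← hk₀k]; ring
      _ = k₀inv := by rw [expPS_mul_neg hCSu, one_mul]
  intro d hd
  have hgoal1 : expPS (-(d • Su)) = k₀inv ^ d := by
    rw [← smul_neg, expPS_nsmul hCSuneg, hkinv]
  rw [hgoal1]
  have hres := coeff_subG_res hh hhi (k₀inv ^ d) d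
  rw [← hG_def, subG_pow hG, hσk₀inv] at hres
  rw [← hres]
  have hsplit : h ^ d * (hinv ^ (d + 1) * d⁄dX R G)
      = (h ^ (d + 1) * hinv ^ ((d + 1) + 0)) + X * ((h ^ d * hinv ^ (d + 1)) * d⁄dX R h) := by
    rw [hG_def, derivative_X_mul]; ring
  rw [hsplit, pow_mul_pow_hinv hhi (d + 1) 0,
    show d + 1 = d + (0 + 1) by omega, pow_mul_pow_hinv hhi d 1, pow_zero, pow_one]
  rw [map_add]
  obtain ⟨e, rfl⟩ : ∃ e, d = e + 1 := ⟨d - 1, by omega⟩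
  rw [coeff_one, if_neg (Nat.succ_ne_zero e), zero_add, coeff_succ_X_mul]
  have hDh : hinv * d⁄dX R h = d⁄dX R Sb := by
    have hdh : d⁄dX R h = d⁄dX R Sb * h := by
      rw [hh_def]; exact derivative_expPS hCSb
    calc hinv * d⁄dX R h = d⁄dX R Sb * (h * hinv) := by rw [hdh]; ring
      _ = d⁄dX R Sb := by rw [hhi, mul_one]
  rw [hDh, coeff_derivative]
  rw [hSb, coeff_mk, if_neg (Nat.succ_ne_zero e)]
  have := inv_nsmul_mul (R := R) (Nat.succ_ne_zero e) (b (e + 1))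
  push_cast at this ⊢
  rw [this]
end
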